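/- Let y, μ ∈ ℝ with y ≠ μ, and let the forecast distribution be N(μ, σ²) with CDF F_σ(x) = Φ((x-μ)/σ). Then the standard deviation minimizing CRPS(F_σ, y) = ∫ (F_σ(x) - 𝟙{x ≥ y})² dx over σ > 0 is σ* = |y - μ| / √(ln 2). -/

import Mathlib

open MeasureTheory Set Real

/-- Standard normal CDF. -/
noncomputable def stdNormalCDF (x : ℝ) : ℝ :=
  ∫ t in Set.Iic x, Real.exp (-t ^ 2 / 2) / Real.sqrt (2 * Real.pi)

/-- CRPS of the Gaussian forecast `N(μ, σ²)` against observation `y`. -/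
noncomputable def gaussCRPS (μ σ y : ℝ) : ℝ :=
  ∫ x : ℝ, (stdNormalCDF ((x - μ) / σ) - (if y ≤ x then (1 : ℝ) else 0)) ^ 2

open Filter

noncomputable def phi (t : ℝ) : ℝ := Real.exp (-t ^ 2 / 2) / Real.sqrt (2 * Real.pi)

lemma phi_pos (t : ℝ) : 0 < phi t := by
  apply div_pos (Real.exp_pos _)
  positivity

lemma phi_even (t : ℝ) : phi (-t) = phi t := by simp [phi]

lemma continuous_phi : Continuous phi := by
  unfold phi; fun_prop

lemma integrable_phi : Integrable phi := by
  have h : Integrable (fun t : ℝ => Real.exp (-(1/2) * t ^ 2)) :=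
    integrable_exp_neg_mul_sq (by norm_num)
  have : phi = fun t => Real.exp (-(1/2) * t ^ 2) * (Real.sqrt (2 * Real.pi))⁻¹ := by
    funext t; rw [phi]; ring_nf
  rw [this]
  exact h.mul_const _

lemma integral_phi : ∫ t : ℝ, phi t = 1 := by
  have h := integral_gaussian (1/2)
  have h2 : ∫ t : ℝ, Real.exp (-(1/2) * t ^ 2) = Real.sqrt (2 * Real.pi) := by
    rw [h]; norm_num [mul_comm]
  have : (fun t : ℝ => phi t) = fun t => Real.exp (-(1/2) * t ^ 2) / Real.sqrt (2 * Real.pi) := by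
    funext t; rw [phi]; ring_nf
  rw [this, integral_div, h2, div_self (by positivity)]

lemma cdf_eq (x : ℝ) : stdNormalCDF x = ∫ t in Set.Iic x, phi t := rfl

lemma cdf_add_cdf_neg (x : ℝ) : stdNormalCDF x + stdNormalCDF (-x) = 1 := by
  have h1 : stdNormalCDF (-x) = ∫ t in Set.Ioi x, phi t := by
    rw [cdf_eq]
    have := integral_comp_neg_Iic (-x) phi
    simp only [phi_even, neg_neg] at this
    exact this
  rw [cdf_eq, h1, intervalIntegral.integral_Iic_add_Ioi integrable_phi.integrableOn integrable_phi.integrableOn,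
    integral_phi]

lemma cdf_neg (x : ℝ) : stdNormalCDF (-x) = 1 - stdNormalCDF x := by
  have := cdf_add_cdf_neg x; linarith

lemma cdf_hasDeriv (x : ℝ) : HasDerivAt stdNormalCDF (phi x) x := by
  have key : ∀ u : ℝ, stdNormalCDF u = stdNormalCDF 0 + ∫ t in (0:ℝ)..u, phi t := by
    intro u
    rw [cdf_eq, cdf_eq, ← intervalIntegral.integral_Iic_sub_Iic
      integrable_phi.integrableOn integrable_phi.integrableOn]
    ring
  have hD : HasDerivAt (fun u => stdNormalCDF 0 + ∫ t in (0:ℝ)..u, phi t) (phi x) x := by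
    apply HasDerivAt.const_add
    exact intervalIntegral.integral_hasDerivAt_right
      integrable_phi.intervalIntegrable
      (continuous_phi.stronglyMeasurable.stronglyMeasurableAtFilter)
      continuous_phi.continuousAt
  exact hD.congr_of_eventuallyEq (Filter.Eventually.of_forall fun u => key u)

lemma cdf_nonneg (x : ℝ) : 0 ≤ stdNormalCDF x :=
  integral_nonneg fun t => (phi_pos t).le

lemma cdf_le_one (x : ℝ) : stdNormalCDF x ≤ 1 := by
  have := cdf_add_cdf_neg x
  have := cdf_nonneg (-x)
  linarith

lemma continuous_cdf : Continuous stdNormalCDF :=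
  continuous_iff_continuousAt.2 fun x => (cdf_hasDeriv x).continuousAt

lemma phi_hasDeriv (x : ℝ) : HasDerivAt phi (-x * phi x) x := by
  have h : HasDerivAt (fun t : ℝ => Real.exp (-t ^ 2 / 2)) (-x * Real.exp (-x ^ 2 / 2)) x := by
    have h1 : HasDerivAt (fun t : ℝ => -t ^ 2 / 2) (-x) x := by
      have := ((hasDerivAt_pow 2 x).neg).div_const 2
      simpa using this.congr_deriv (by ring)
    simpa using (h1.exp).congr_deriv (by ring)
  have := h.div_const (Real.sqrt (2 * Real.pi))
  exact this.congr_deriv (by unfold phi; ring)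

lemma integrable_mul_phi : Integrable (fun t : ℝ => t * phi t) := by
  have h : Integrable (fun t : ℝ => t * Real.exp (-(1/2) * t ^ 2)) :=
    integrable_mul_exp_neg_mul_sq (by norm_num)
  have : (fun t : ℝ => t * phi t)
      = fun t => (t * Real.exp (-(1/2) * t ^ 2)) * (Real.sqrt (2 * Real.pi))⁻¹ := by
    funext t; rw [phi]; ring_nf
  rw [this]
  exact h.mul_const _

lemma integral_mul_phi_Ioi (u : ℝ) : ∫ t in Set.Ioi u, t * phi t = phi u := by
  have h := integral_Ioi_of_hasDerivAt_of_tendsto' (f := fun t => -phi t)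
    (f' := fun t => t * phi t) (a := u) (m := 0)
    (fun x _ => by exact (phi_hasDeriv x).neg.congr_deriv (by ring))
    (integrable_mul_phi.integrableOn)
    ?_
  · rw [h]; ring
  · have : Tendsto phi atTop (nhds 0) := by
      have h1 : Tendsto (fun t : ℝ => -t ^ 2 / 2) atTop atBot := by
        apply Filter.Tendsto.atBot_div_const (by norm_num)
        exact tendsto_neg_atBot_iff.mpr (tendsto_pow_atTop (by norm_num))
      have := Real.tendsto_exp_atBot.comp h1
      unfold phi
      simpa using this.div_const (Real.sqrt (2 * Real.pi))
    simpa using this.neg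

lemma one_sub_cdf_eq (u : ℝ) : 1 - stdNormalCDF u = ∫ t in Set.Ioi u, phi t := by
  have h1 : stdNormalCDF (-u) = ∫ t in Set.Ioi u, phi t := by
    rw [cdf_eq]
    have := integral_comp_neg_Iic (-u) phi
    simp only [phi_even, neg_neg] at this
    exact this
  rw [← h1, cdf_neg]

lemma one_sub_cdf_le (u : ℝ) (hu : 1 ≤ u) : 1 - stdNormalCDF u ≤ phi u := by
  rw [one_sub_cdf_eq, ← integral_mul_phi_Ioi u]
  apply setIntegral_mono_on integrable_phi.integrableOn integrable_mul_phi.integrableOn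
    measurableSet_Ioi
  intro t ht
  have ht1 : 1 ≤ t := hu.trans (le_of_lt ht)
  nlinarith [phi_pos t]

lemma tendsto_phi_atTop : Tendsto phi atTop (nhds 0) := by
  have h1 : Tendsto (fun t : ℝ => -t ^ 2 / 2) atTop atBot := by
    apply Filter.Tendsto.atBot_div_const (by norm_num)
    exact tendsto_neg_atBot_iff.mpr (tendsto_pow_atTop (by norm_num))
  have := Real.tendsto_exp_atBot.comp h1
  unfold phi
  simpa using this.div_const (Real.sqrt (2 * Real.pi))

lemma tendsto_one_sub_cdf_atTop : Tendsto (fun u => 1 - stdNormalCDF u) atTop (nhds 0) := by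
  apply squeeze_zero' (g := phi)
  · filter_upwards with u; have := cdf_le_one u; linarith
  · filter_upwards [eventually_ge_atTop (1:ℝ)] with u hu using one_sub_cdf_le u hu
  · exact tendsto_phi_atTop

lemma tendsto_cdf_atTop : Tendsto stdNormalCDF atTop (nhds 1) := by
  have := tendsto_one_sub_cdf_atTop.const_sub 1
  simpa using this

lemma tendsto_mul_phi_atTop : Tendsto (fun u : ℝ => u * phi u) atTop (nhds 0) := by
  apply squeeze_zero' (g := fun u => (Real.sqrt (2 * Real.pi))⁻¹ * (u * Real.exp (-u)))
  · filter_upwards [eventually_ge_atTop (0:ℝ)] with u hu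
    exact mul_nonneg hu (phi_pos u).le
  · filter_upwards [eventually_ge_atTop (2:ℝ)] with u hu
    unfold phi
    rw [mul_comm ((Real.sqrt (2 * Real.pi))⁻¹) _, div_eq_mul_inv, ← mul_assoc]
    apply mul_le_mul_of_nonneg_right _ (by positivity)
    apply mul_le_mul_of_nonneg_left _ (by linarith)
    apply Real.exp_le_exp.mpr
    nlinarith
  · have := (tendsto_pow_mul_exp_neg_atTop_nhds_zero 1).const_mul ((Real.sqrt (2 * Real.pi))⁻¹)
    simpa using this

lemma tendsto_mul_sq_one_sub_cdf : Tendsto (fun u : ℝ => u * (1 - stdNormalCDF u)^2) atTop (nhds 0) := by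
  apply squeeze_zero' (g := fun u => u * phi u)
  · filter_upwards [eventually_ge_atTop (0:ℝ)] with u hu
    have := cdf_le_one u; positivity
  · filter_upwards [eventually_ge_atTop (1:ℝ)] with u hu
    apply mul_le_mul_of_nonneg_left _ (by linarith)
    have h1 := one_sub_cdf_le u hu
    have h2 : 1 - stdNormalCDF u ≤ 1 := by have := cdf_nonneg u; linarith
    have h0 : 0 ≤ 1 - stdNormalCDF u := by have := cdf_le_one u; linarith
    nlinarith
  · exact tendsto_mul_phi_atTop

lemma integrable_phi_sq : Integrable (fun t : ℝ => phi t ^ 2) := by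
  have h : Integrable (fun t : ℝ => Real.exp (-1 * t ^ 2)) :=
    integrable_exp_neg_mul_sq (by norm_num)
  have : (fun t : ℝ => phi t ^ 2)
      = fun t => Real.exp (-1 * t ^ 2) * ((Real.sqrt (2 * Real.pi))^2)⁻¹ := by
    funext t; rw [phi, div_pow, ← Real.exp_nat_mul]
    ring_nf
  rw [this]
  exact h.mul_const _

lemma integrableOn_one_sub_cdf_sq (z : ℝ) :
    IntegrableOn (fun u => (1 - stdNormalCDF u)^2) (Set.Ioi z) := by
  have hcont : Continuous fun u => (1 - stdNormalCDF u)^2 := by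
    have := continuous_cdf; fun_prop
  have h1 : IntegrableOn (fun u => (1 - stdNormalCDF u)^2) (Set.Ioi 1) := by
    apply Integrable.mono' (integrable_phi_sq.integrableOn)
      (hcont.aestronglyMeasurable.restrict)
    filter_upwards [ae_restrict_mem measurableSet_Ioi] with u (hu : 1 < u)
    have h1 := one_sub_cdf_le u hu.le
    have h0 : 0 ≤ 1 - stdNormalCDF u := by have := cdf_le_one u; linarith
    rw [Real.norm_eq_abs, abs_of_nonneg (by positivity)]
    nlinarith [phi_pos u]
  have h2 : IntegrableOn (fun u => (1 - stdNormalCDF u)^2) (Set.Ioc z 1) :=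
    (hcont.integrableOn_Icc).mono_set Set.Ioc_subset_Icc_self
  have hsub : Set.Ioi z ⊆ Set.Ioc z 1 ∪ Set.Ioi 1 := by
    intro u hu
    rcases le_or_gt u 1 with h | h
    · exact Or.inl ⟨hu, h⟩
    · exact Or.inr h
  exact (h2.union h1).mono_set hsub

lemma cdf_le_phi (u : ℝ) (hu : u ≤ -1) : stdNormalCDF u ≤ phi u := by
  have h := one_sub_cdf_le (-u) (by linarith)
  rw [cdf_neg] at h
  rw [phi_even] at h
  linarith [h]

lemma integrableOn_cdf_sq (z : ℝ) :
    IntegrableOn (fun u => (stdNormalCDF u)^2) (Set.Iic z) := by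
  have hcont : Continuous fun u => (stdNormalCDF u)^2 := by
    have := continuous_cdf; fun_prop
  have h1 : IntegrableOn (fun u => (stdNormalCDF u)^2) (Set.Iio (-1)) := by
    apply Integrable.mono' (integrable_phi_sq.integrableOn)
      (hcont.aestronglyMeasurable.restrict)
    filter_upwards [ae_restrict_mem measurableSet_Iio] with u (hu : u < -1)
    have h1 := cdf_le_phi u hu.le
    have h0 := cdf_nonneg u
    rw [Real.norm_eq_abs, abs_of_nonneg (by positivity)]
    nlinarith [phi_pos u]
  have h2 : IntegrableOn (fun u => (stdNormalCDF u)^2) (Set.Icc (-1) z) :=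
    hcont.integrableOn_Icc
  have hsub : Set.Iic z ⊆ Set.Iio (-1) ∪ Set.Icc (-1) z := by
    intro u hu
    rcases lt_or_ge u (-1) with h | h
    · exact Or.inl h
    · exact Or.inr ⟨h, hu⟩
  exact (h1.union h2).mono_set hsub

noncomputable def Fanti (u : ℝ) : ℝ :=
  u * (1 - stdNormalCDF u)^2 - 2 * (1 - stdNormalCDF u) * phi u
    + (1 / Real.sqrt Real.pi) * (1 - stdNormalCDF (Real.sqrt 2 * u))

lemma sqrt_two_pi_eq : Real.sqrt (2 * Real.pi) = Real.sqrt 2 * Real.sqrt Real.pi :=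
  Real.sqrt_mul (by norm_num) _

lemma phi_sq_identity (u : ℝ) :
    2 * phi u ^ 2 = (Real.sqrt 2 / Real.sqrt Real.pi) * phi (Real.sqrt 2 * u) := by
  have hs2 : (Real.sqrt 2)^2 = 2 := Real.sq_sqrt (by norm_num)
  have hsp : (Real.sqrt Real.pi)^2 = Real.pi := Real.sq_sqrt Real.pi_pos.le
  have hs2p : (0:ℝ) < Real.sqrt 2 := by positivity
  have hspp : (0:ℝ) < Real.sqrt Real.pi := Real.sqrt_pos.mpr Real.pi_pos
  unfold phi
  rw [sqrt_two_pi_eq]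
  have h2 : ((Real.sqrt 2 * u) ^ 2 : ℝ) = 2 * u ^ 2 := by rw [mul_pow, hs2]
  rw [h2]
  rw [div_pow, sq (Real.exp _), ← Real.exp_add]
  have h3 : (-u^2/2) + (-u^2/2) = -(2*u^2)/2 := by ring
  rw [h3, mul_pow, hs2, hsp]
  field_simp
  ring_nf
  rw [hsp]

lemma Fanti_hasDeriv (u : ℝ) : HasDerivAt Fanti ((1 - stdNormalCDF u)^2) u := by
  have hΦ := cdf_hasDeriv u
  have hφ := phi_hasDeriv u
  have h1 : HasDerivAt (fun v => 1 - stdNormalCDF v) (-phi u) u := (hΦ.const_sub 1)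
  have h1sq : HasDerivAt (fun v => (1 - stdNormalCDF v)^2)
      (2 * (1 - stdNormalCDF u) * (-phi u)) u := by
    exact (h1.pow 2).congr_deriv (by ring)
  have hA : HasDerivAt (fun v => v * (1 - stdNormalCDF v)^2)
      ((1 - stdNormalCDF u)^2 + u * (2 * (1 - stdNormalCDF u) * (-phi u))) u := by
    exact ((hasDerivAt_id' u).mul h1sq).congr_deriv (by ring)
  have hB : HasDerivAt (fun v => 2 * (1 - stdNormalCDF v) * phi v)
      (2 * ((-phi u) * phi u + (1 - stdNormalCDF u) * (-u * phi u))) u := by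
    have h2 := (h1.const_mul 2).mul hφ
    exact h2.congr_deriv (by ring)
  have hC : HasDerivAt (fun v => (1 / Real.sqrt Real.pi) * (1 - stdNormalCDF (Real.sqrt 2 * v)))
      ((1 / Real.sqrt Real.pi) * (-(phi (Real.sqrt 2 * u) * Real.sqrt 2))) u := by
    have hc : HasDerivAt (fun v : ℝ => Real.sqrt 2 * v) (Real.sqrt 2) u := by
      simpa using (hasDerivAt_id u).const_mul (Real.sqrt 2)
    have := ((cdf_hasDeriv (Real.sqrt 2 * u)).comp u hc).const_sub 1
    exact (this.const_mul _).congr_deriv (by ring)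
  have := (hA.sub hB).add hC
  apply this.congr_deriv
  have key := phi_sq_identity u
  field_simp at key ⊢
  nlinarith [key]

lemma tendsto_Fanti_atTop : Tendsto Fanti atTop (nhds 0) := by
  have h1 := tendsto_mul_sq_one_sub_cdf
  have h2 : Tendsto (fun u => 2 * (1 - stdNormalCDF u) * phi u) atTop (nhds 0) := by
    have := (tendsto_one_sub_cdf_atTop.mul tendsto_phi_atTop).const_mul 2
    simpa [mul_assoc] using this
  have h3 : Tendsto (fun u => (1 / Real.sqrt Real.pi) * (1 - stdNormalCDF (Real.sqrt 2 * u)))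
      atTop (nhds 0) := by
    have hc : Tendsto (fun u : ℝ => Real.sqrt 2 * u) atTop atTop := by
      apply Filter.Tendsto.const_mul_atTop (by positivity) tendsto_id
    have := (tendsto_one_sub_cdf_atTop.comp hc).const_mul (1 / Real.sqrt Real.pi)
    simpa using this
  unfold Fanti
  have := (h1.sub h2).add h3
  simpa using this

lemma integral_Ioi_one_sub_cdf_sq (z : ℝ) :
    ∫ u in Set.Ioi z, (1 - stdNormalCDF u)^2 = -Fanti z := by
  have h := integral_Ioi_of_hasDerivAt_of_tendsto' (f := Fanti)
    (f' := fun u => (1 - stdNormalCDF u)^2) (a := z) (m := 0)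
    (fun x _ => Fanti_hasDeriv x) (integrableOn_one_sub_cdf_sq z) tendsto_Fanti_atTop
  rw [h]; ring

lemma integral_Iic_cdf_sq (z : ℝ) :
    ∫ u in Set.Iic z, (stdNormalCDF u)^2 = -Fanti (-z) := by
  have h := integral_comp_neg_Iic z (fun v => (1 - stdNormalCDF v)^2)
  simp only [cdf_neg] at h
  have h2 : ∀ x : ℝ, (1 - (1 - stdNormalCDF x))^2 = (stdNormalCDF x)^2 := by
    intro x; ring
  simp only [h2] at h
  rw [h, integral_Ioi_one_sub_cdf_sq]

noncomputable def gval (z : ℝ) : ℝ :=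
  z * (2 * stdNormalCDF z - 1) + 2 * phi z - 1 / Real.sqrt Real.pi

lemma neg_Fanti_add (z : ℝ) : -Fanti (-z) + -Fanti z = gval z := by
  unfold Fanti gval
  have e1 : stdNormalCDF (-z) = 1 - stdNormalCDF z := cdf_neg z
  have e2 : phi (-z) = phi z := phi_even z
  have e3 : stdNormalCDF (Real.sqrt 2 * -z) = 1 - stdNormalCDF (Real.sqrt 2 * z) := by
    rw [show Real.sqrt 2 * -z = -(Real.sqrt 2 * z) by ring, cdf_neg]
  rw [e1, e2, e3]
  ring

lemma integral_sq_indicator (z : ℝ) :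
    ∫ u : ℝ, (stdNormalCDF u - (if z ≤ u then (1:ℝ) else 0))^2 = gval z := by
  set f : ℝ → ℝ := fun u => (stdNormalCDF u - (if z ≤ u then (1:ℝ) else 0))^2 with hf
  have hIio : ∀ u ∈ Set.Iio z, f u = (stdNormalCDF u)^2 := by
    intro u hu
    simp only [hf, if_neg (not_le.mpr (Set.mem_Iio.mp hu)), sub_zero]
  have hIci : ∀ u ∈ Set.Ici z, f u = (1 - stdNormalCDF u)^2 := by
    intro u hu
    have h : (if z ≤ u then (1:ℝ) else 0) = 1 := if_pos hu
    simp only [hf, h]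
    ring
  have hint1 : IntegrableOn f (Set.Iio z) := by
    apply ((integrableOn_cdf_sq z).mono_set Set.Iio_subset_Iic_self).congr_fun
      (fun u hu => (hIio u hu).symm) measurableSet_Iio
  have hint2 : IntegrableOn f (Set.Ici z) := by
    have h := (integrableOn_one_sub_cdf_sq z)
    have h2 : IntegrableOn (fun u => (1 - stdNormalCDF u)^2) (Set.Ici z) := by
      rw [IntegrableOn, ← restrict_Ioi_eq_restrict_Ici]; exact h
    exact h2.congr_fun (fun u hu => (hIci u hu).symm) measurableSet_Ici
  rw [← intervalIntegral.integral_Iio_add_Ici hint1 hint2]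
  rw [setIntegral_congr_fun measurableSet_Iio hIio,
    setIntegral_congr_fun measurableSet_Ici hIci]
  rw [← integral_Iic_eq_integral_Iio, integral_Ici_eq_integral_Ioi,
    integral_Iic_cdf_sq, integral_Ioi_one_sub_cdf_sq]
  exact neg_Fanti_add z

lemma gval_even (z : ℝ) : gval (-z) = gval z := by
  unfold gval
  rw [cdf_neg, phi_even]
  ring

lemma gaussCRPS_eq (μ σ y : ℝ) (hσ : 0 < σ) :
    gaussCRPS μ σ y = σ * gval (|y - μ| / σ) := by
  set z := (y - μ) / σ with hz
  have step1 : gaussCRPS μ σ y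
      = ∫ t : ℝ, (stdNormalCDF (t / σ) - (if y - μ ≤ t then (1:ℝ) else 0))^2 := by
    unfold gaussCRPS
    rw [← integral_sub_right_eq_self
      (fun t => (stdNormalCDF (t / σ) - (if y - μ ≤ t then (1:ℝ) else 0))^2) μ]
    congr 1
    funext x
    congr 2
    exact if_congr (by constructor <;> intro h <;> linarith) rfl rfl
  have step2 : (fun t : ℝ => (stdNormalCDF (t / σ) - (if y - μ ≤ t then (1:ℝ) else 0))^2)
      = fun t => (stdNormalCDF (t / σ) - (if z ≤ t / σ then (1:ℝ) else 0))^2 := by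
    funext t
    congr 2
    apply if_congr _ rfl rfl
    rw [hz]
    constructor
    · intro h; exact div_le_div_of_nonneg_right h hσ.le |>.trans_eq rfl
    · intro h
      have := mul_le_mul_of_nonneg_right h hσ.le
      rwa [div_mul_cancel₀ _ hσ.ne', div_mul_cancel₀ _ hσ.ne'] at this
  have step3 : ∫ t : ℝ, (stdNormalCDF (t / σ) - (if z ≤ t / σ then (1:ℝ) else 0))^2
      = |σ| • ∫ u : ℝ, (stdNormalCDF u - (if z ≤ u then (1:ℝ) else 0))^2 :=
    MeasureTheory.Measure.integral_comp_div
      (fun u => (stdNormalCDF u - (if z ≤ u then (1:ℝ) else 0))^2) σ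
  rw [step1, step2, step3, integral_sq_indicator, abs_of_pos hσ, smul_eq_mul]
  congr 1
  rcases le_or_gt μ y with h | h
  · rw [abs_of_nonneg (by linarith), hz]
  · rw [abs_of_neg (by linarith), hz, ← gval_even]
    congr 1
    ring

noncomputable def Kfun (c σ : ℝ) : ℝ :=
  c * (2 * stdNormalCDF (c / σ) - 1) + 2 * σ * phi (c / σ) - σ / Real.sqrt Real.pi

lemma gval_mul_eq (c σ : ℝ) (hσ : σ ≠ 0) : σ * gval (c / σ) = Kfun c σ := by
  unfold gval Kfun
  field_simp

lemma Kfun_hasDeriv (c σ : ℝ) (hσ : 0 < σ) :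
    HasDerivAt (Kfun c) (2 * phi (c / σ) - 1 / Real.sqrt Real.pi) σ := by
  have hw : HasDerivAt (fun s : ℝ => c / s) (c * (-(σ^2)⁻¹)) σ := by
    have h := (hasDerivAt_inv hσ.ne').const_mul c
    have he : (fun s : ℝ => c * s⁻¹) = fun s : ℝ => c / s := by
      funext s; rw [div_eq_mul_inv]
    rwa [he] at h
  have hΦ : HasDerivAt (fun s : ℝ => stdNormalCDF (c / s))
      (phi (c / σ) * (c * (-(σ^2)⁻¹))) σ := (cdf_hasDeriv (c / σ)).comp σ hw
  have hφ : HasDerivAt (fun s : ℝ => phi (c / s))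
      ((-(c / σ) * phi (c / σ)) * (c * (-(σ^2)⁻¹))) σ := (phi_hasDeriv (c / σ)).comp σ hw
  have t1 : HasDerivAt (fun s : ℝ => c * (2 * stdNormalCDF (c / s) - 1))
      (c * (2 * (phi (c / σ) * (c * (-(σ^2)⁻¹))))) σ :=
    ((hΦ.const_mul 2).sub_const 1).const_mul c
  have t2 : HasDerivAt (fun s : ℝ => 2 * s * phi (c / s))
      (2 * 1 * phi (c / σ) + 2 * σ * ((-(c / σ) * phi (c / σ)) * (c * (-(σ^2)⁻¹)))) σ := by
    have h := ((hasDerivAt_id σ).const_mul 2).mul hφ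
    simp only [id_eq] at h
    exact h.congr_deriv (by ring)
  have t3 : HasDerivAt (fun s : ℝ => s / Real.sqrt Real.pi)
      (1 / Real.sqrt Real.pi) σ := by
    simpa using (hasDerivAt_id σ).div_const (Real.sqrt Real.pi)
  have := (t1.add t2).sub t3
  apply this.congr_deriv
  field_simp
  ring

lemma sqrt_pi_pos : (0:ℝ) < Real.sqrt Real.pi := Real.sqrt_pos.mpr Real.pi_pos

lemma two_phi_lt (z : ℝ) (hz : Real.log 2 < z^2) :
    2 * phi z - 1 / Real.sqrt Real.pi < 0 := by
  have hE : Real.exp (-z^2/2) ^ 2 = Real.exp (-z^2) := by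
    rw [sq, ← Real.exp_add]; congr 1; ring
  have hhalf : Real.exp (-z^2) < 1/2 := by
    have h2 : (1:ℝ)/2 = Real.exp (-Real.log 2) := by
      rw [Real.exp_neg, Real.exp_log two_pos]; norm_num
    rw [h2]
    exact Real.exp_lt_exp.mpr (by linarith)
  have hkey : 2 * Real.exp (-z^2/2) < Real.sqrt 2 := by
    have h4 : (2 * Real.exp (-z^2/2))^2 < (Real.sqrt 2)^2 := by
      rw [mul_pow, hE, Real.sq_sqrt (by norm_num : (0:ℝ) ≤ 2)]
      nlinarith
    exact lt_of_pow_lt_pow_left₀ 2 (Real.sqrt_nonneg 2) h4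
  have hs2 : (0:ℝ) < Real.sqrt 2 := by positivity
  have hsp := sqrt_pi_pos
  rw [sub_neg]
  unfold phi
  rw [sqrt_two_pi_eq]
  have e1 : 2 * (Real.exp (-z^2/2) / (Real.sqrt 2 * Real.sqrt Real.pi))
      = (2 * Real.exp (-z^2/2)) / (Real.sqrt 2 * Real.sqrt Real.pi) := by ring
  have e2 : 1 / Real.sqrt Real.pi = Real.sqrt 2 / (Real.sqrt 2 * Real.sqrt Real.pi) := by
    field_simp
  rw [e1, e2]
  exact (div_lt_div_iff_of_pos_right (by positivity)).mpr hkey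

lemma two_phi_gt (z : ℝ) (hz : z^2 < Real.log 2) :
    0 < 2 * phi z - 1 / Real.sqrt Real.pi := by
  have hE : Real.exp (-z^2/2) ^ 2 = Real.exp (-z^2) := by
    rw [sq, ← Real.exp_add]; congr 1; ring
  have hhalf : (1:ℝ)/2 < Real.exp (-z^2) := by
    have h2 : (1:ℝ)/2 = Real.exp (-Real.log 2) := by
      rw [Real.exp_neg, Real.exp_log two_pos]; norm_num
    rw [h2]
    exact Real.exp_lt_exp.mpr (by linarith)
  have hkey : Real.sqrt 2 < 2 * Real.exp (-z^2/2) := by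
    have h4 : (Real.sqrt 2)^2 < (2 * Real.exp (-z^2/2))^2 := by
      rw [mul_pow, hE, Real.sq_sqrt (by norm_num : (0:ℝ) ≤ 2)]
      nlinarith
    exact lt_of_pow_lt_pow_left₀ 2 (by positivity) h4
  have hs2 : (0:ℝ) < Real.sqrt 2 := by positivity
  have hsp := sqrt_pi_pos
  rw [sub_pos]
  unfold phi
  rw [sqrt_two_pi_eq]
  have e1 : 2 * (Real.exp (-z^2/2) / (Real.sqrt 2 * Real.sqrt Real.pi))
      = (2 * Real.exp (-z^2/2)) / (Real.sqrt 2 * Real.sqrt Real.pi) := by ring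
  have e2 : 1 / Real.sqrt Real.pi = Real.sqrt 2 / (Real.sqrt 2 * Real.sqrt Real.pi) := by
    field_simp
  rw [e1, e2]
  exact (div_lt_div_iff_of_pos_right (by positivity)).mpr hkey

/-- The unique minimizer of the Gaussian CRPS over `σ > 0` is `|y - μ| / √(ln 2)`. -/
theorem crps_unique_minimizer_mean (y μ : ℝ) (hy : y ≠ μ) :
    ∀ σ : ℝ, 0 < σ → σ ≠ |y - μ| / Real.sqrt (Real.log 2) →
      gaussCRPS μ (|y - μ| / Real.sqrt (Real.log 2)) y < gaussCRPS μ σ y := by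
  intro σ hσ hne
  set c := |y - μ| with hc
  have hcpos : 0 < c := abs_pos.mpr (sub_ne_zero.mpr hy)
  have hlog : 0 < Real.log 2 := Real.log_pos (by norm_num)
  have hsl : 0 < Real.sqrt (Real.log 2) := Real.sqrt_pos.mpr hlog
  set s := c / Real.sqrt (Real.log 2) with hs
  have hspos : 0 < s := div_pos hcpos hsl
  have hsc : Real.sqrt (Real.log 2) * s = c := by rw [hs]; field_simp
  have hKeq : ∀ t : ℝ, 0 < t → gaussCRPS μ t y = Kfun c t := by
    intro t ht
    rw [gaussCRPS_eq μ t y ht, ← hc, gval_mul_eq c t ht.ne']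
  rw [hKeq σ hσ, hKeq s hspos]
  rcases lt_or_gt_of_ne hne with hlt | hgt
  · have hmono : StrictAntiOn (Kfun c) (Set.Icc σ s) := by
      apply strictAntiOn_of_deriv_neg (convex_Icc _ _)
      · intro t ht
        exact ((Kfun_hasDeriv c t (lt_of_lt_of_le hσ ht.1)).continuousAt).continuousWithinAt
      · intro t ht
        rw [interior_Icc] at ht
        have ht0 : 0 < t := hσ.trans ht.1
        rw [(Kfun_hasDeriv c t ht0).deriv]
        apply two_phi_lt
        have h1 : Real.sqrt (Real.log 2) < c / t := by
          rw [lt_div_iff₀ ht0, ← hsc]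
          exact mul_lt_mul_of_pos_left ht.2 hsl
        have h2 := pow_lt_pow_left₀ h1 hsl.le two_ne_zero
        rwa [Real.sq_sqrt hlog.le] at h2
    exact hmono ⟨le_rfl, hlt.le⟩ ⟨hlt.le, le_rfl⟩ hlt
  · have hmono : StrictMonoOn (Kfun c) (Set.Icc s σ) := by
      apply strictMonoOn_of_deriv_pos (convex_Icc _ _)
      · intro t ht
        exact ((Kfun_hasDeriv c t (lt_of_lt_of_le hspos ht.1)).continuousAt).continuousWithinAt
      · intro t ht
        rw [interior_Icc] at ht
        have ht0 : 0 < t := hspos.trans ht.1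
        rw [(Kfun_hasDeriv c t ht0).deriv]
        apply two_phi_gt
        have h1 : c / t < Real.sqrt (Real.log 2) := by
          rw [div_lt_iff₀ ht0, ← hsc]
          exact mul_lt_mul_of_pos_left ht.1 hsl
        have h2 := pow_lt_pow_left₀ h1 (by positivity) two_ne_zero
        rwa [Real.sq_sqrt hlog.le] at h2
    exact hmono ⟨le_rfl, hgt.le⟩ ⟨hgt.le, le_rfl⟩ hgt
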